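/- Under the stated assumptions on σ and ε₀, the solution v of the three-level method satisfies the strong energy stability bound: for every m with 1 ≤ m ≤ M, ‖δ̄ₜv^m‖_B² + (σ − 1/4)hₜ²‖δ̄ₜv^m‖_A² + ‖s̄ₜv^m‖_A² ≤ ( (‖v⁰‖_A² + ε₀⁻²⟨B⁻¹u₁, u₁⟩)^{1/2} + 2ε₀⁻¹ [ (1/4)hₜ⟨B⁻¹f⁰, f⁰⟩^{1/2} + hₜ Σ_{l=1}^{M−1} ⟨B⁻¹f^l, f^l⟩^{1/2} ] )². -/

import Mathlib

/-!
With `d = δ̄ₜv^m`, `s = s̄ₜv^m`, the energy `E_m = ‖d‖_B² + (σ - 1/4)hₜ²‖d‖_A² + ‖s‖_A²` dominates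
`ε₀²‖d‖_B² + ‖s‖_A²` under either assumption on `σ`. Pairing the scheme with
`δ̄ₜv^{m+1} + δ̄ₜv^m` gives the exact identity `E_{m+1} - E_m = hₜ⟨f^m, δ̄ₜv^{m+1} + δ̄ₜv^m⟩`, and
`⟨g, w⟩ ≤ ⟨B⁻¹g, g⟩^{1/2}‖w‖_B` turns it into `√E_{m+1} ≤ √E_m + hₜε₀⁻¹⟨B⁻¹f^m, f^m⟩^{1/2}`.
The initial condition bounds `√E_1` the same way, and summing the steps gives the estimate.
-/

open scoped RealInnerProductSpace

lemma le_add_of_sq_le_sq_add_mul {a b c : ℝ} (hb : 0 ≤ b) (hc : 0 ≤ c)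
    (h : a ^ 2 ≤ b ^ 2 + c * (a + b)) : a ≤ b + c := by
  nlinarith

lemma mul_add_mul_le_sqrt_mul_sqrt (a b c d : ℝ) :
    a * b + c * d ≤ √(a ^ 2 + c ^ 2) * √(b ^ 2 + d ^ 2) := by
  rw [← Real.sqrt_mul (by positivity)]
  exact (le_abs_self _).trans <| Real.abs_le_sqrt <| by nlinarith [sq_nonneg (a * d - c * b)]

lemma le_add_sum_Ico_of_le_add {a c : ℕ → ℝ} {M : ℕ}
    (h : ∀ m, 1 ≤ m → m + 1 ≤ M → a (m + 1) ≤ a m + c m) :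
    ∀ m, 1 ≤ m → m ≤ M → a m ≤ a 1 + ∑ l ∈ Finset.Ico 1 m, c l := by
  intro m hm
  induction m, hm using Nat.le_induction with
  | base => simp
  | succ n hn ih =>
    intro hnM
    rw [Finset.sum_Ico_succ_top hn]
    linarith [ih (by omega), h n hn hnM]

namespace LinearMap

variable {H : Type*} [NormedAddCommGroup H] [InnerProductSpace ℝ H]

lemma IsSymmetric.inner_map_comm {T : H →ₗ[ℝ] H} (hT : T.IsSymmetric) (x y : H) :
    ⟪T x, y⟫ = ⟪T y, x⟫ := by
  rw [hT, real_inner_comm]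

lemma isPositive_of_inner_pos {T : H →ₗ[ℝ] H} (hsym : T.IsSymmetric)
    (hpos : ∀ x, x ≠ 0 → 0 < ⟪T x, x⟫) : T.IsPositive := by
  refine (isPositive_iff T).2 ⟨hsym, fun x => ?_⟩
  rcases eq_or_ne x 0 with rfl | hx
  · simp
  · exact (hpos x hx).le

lemma IsPositive.inner_le_sqrt_mul_sqrt {T : H →ₗ[ℝ] H} (hT : T.IsPositive) (x y : H) :
    ⟪T x, y⟫ ≤ √⟪T x, x⟫ * √⟪T y, y⟫ := by
  have hcs :=
    BilinForm.apply_mul_apply_le_of_forall_zero_le (innerₗ H ∘ₗ T) hT.inner_nonneg_left x y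
  simp only [coe_comp, Function.comp_apply, innerₗ_apply_apply,
    hT.isSymmetric.inner_map_comm y x] at hcs
  rw [← Real.sqrt_mul (hT.inner_nonneg_left x)]
  exact (le_abs_self _).trans (Real.abs_le_sqrt (by rwa [sq]))

variable {B Bi : H →ₗ[ℝ] H} (hB : B.IsPositive) (hBi : ∀ x, B (Bi x) = x)
include hB hBi

lemma IsPositive.inner_rightInverse_self_nonneg (g : H) : 0 ≤ ⟪Bi g, g⟫ := by
  simpa only [real_inner_comm, hBi] using hB.inner_nonneg_left (Bi g)

lemma IsPositive.inner_le_sqrt_rightInverse_mul_sqrt (g w : H) :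
    ⟪g, w⟫ ≤ √⟪Bi g, g⟫ * √⟪B w, w⟫ := by
  simpa only [hBi, real_inner_comm (Bi g)] using hB.inner_le_sqrt_mul_sqrt (Bi g) w

end LinearMap

namespace ThreeLevel

variable {H : Type*} [NormedAddCommGroup H] [InnerProductSpace ℝ H] {B A Bi : H →ₗ[ℝ] H}
  {σ ε h : ℝ}

/-- The energy `‖δ̄ₜy‖_B² + (σ - 1/4)hₜ²‖δ̄ₜy‖_A² + ‖s̄ₜy‖_A²` of two consecutive levels `x, y`. -/
noncomputable def energy (B A : H →ₗ[ℝ] H) (σ h : ℝ) (x y : H) : ℝ :=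
  ⟪B (h⁻¹ • (y - x)), h⁻¹ • (y - x)⟫
    + (σ - 1/4) * h ^ 2 * ⟪A (h⁻¹ • (y - x)), h⁻¹ • (y - x)⟫
    + ⟪A ((1/2 : ℝ) • (x + y)), (1/2 : ℝ) • (x + y)⟫

lemma sq_mul_inner_le_add_of_weight (hB : B.IsPositive) (hA : A.IsPositive)
    (hσ : (1/4 ≤ σ ∧ ε = 1) ∨
      (σ < 1/4 ∧ 0 < ε ∧ ε < 1 ∧ ∃ α : ℝ, 0 < α ∧
        (∀ w : H, ⟪A w, w⟫ ≤ α^2 * ⟪B w, w⟫) ∧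
        (1/4 - σ) * h^2 * α^2 ≤ 1 - ε^2)) (w : H) :
    ε ^ 2 * ⟪B w, w⟫ ≤ ⟪B w, w⟫ + (σ - 1/4) * h ^ 2 * ⟪A w, w⟫ := by
  have hBw := hB.inner_nonneg_left w
  rcases hσ with ⟨hσ, rfl⟩ | ⟨hσ, -, -, α, -, hAB, hα⟩
  · nlinarith [mul_nonneg (mul_nonneg (sub_nonneg.2 hσ) (sq_nonneg h)) (hA.inner_nonneg_left w)]
  · have hσh : 0 ≤ (1/4 - σ) * h ^ 2 := mul_nonneg (by linarith) (sq_nonneg h)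
    nlinarith [mul_le_mul_of_nonneg_left (hAB w) hσh, mul_le_mul_of_nonneg_right hα hBw]

section Bounds

variable (hcoer : ∀ w, ε ^ 2 * ⟪B w, w⟫ ≤ ⟪B w, w⟫ + (σ - 1/4) * h ^ 2 * ⟪A w, w⟫)
include hcoer

lemma sq_mul_inner_add_inner_le_energy (x y : H) :
    ε ^ 2 * ⟪B (h⁻¹ • (y - x)), h⁻¹ • (y - x)⟫
      + ⟪A ((1/2 : ℝ) • (x + y)), (1/2 : ℝ) • (x + y)⟫ ≤ energy B A σ h x y := by
  unfold energy
  linarith [hcoer (h⁻¹ • (y - x))]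

lemma energy_nonneg (hB : B.IsPositive) (hA : A.IsPositive) (x y : H) : 0 ≤ energy B A σ h x y :=
  (add_nonneg (mul_nonneg (sq_nonneg ε) (hB.inner_nonneg_left _)) (hA.inner_nonneg_left _)).trans
    (sq_mul_inner_add_inner_le_energy hcoer x y)

lemma sqrt_inner_le_inv_mul_sqrt_energy (hA : A.IsPositive) (hε : 0 < ε) (x y : H) :
    √⟪B (h⁻¹ • (y - x)), h⁻¹ • (y - x)⟫ ≤ ε⁻¹ * √(energy B A σ h x y) := by
  rw [le_inv_mul_iff₀ hε, ← Real.sqrt_sq hε.le, ← Real.sqrt_mul (sq_nonneg ε)]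
  exact Real.sqrt_le_sqrt <|
    (le_add_of_nonneg_right (hA.inner_nonneg_left _)).trans
      (sq_mul_inner_add_inner_le_energy hcoer x y)

end Bounds

section Identities

variable (hB : B.IsSymmetric) (hA : A.IsSymmetric)
include hB hA

lemma energy_sub_energy (hh : h ≠ 0) (x₁ x₂ x₃ : H) :
    energy B A σ h x₂ x₃ - energy B A σ h x₁ x₂
      = h * ⟪B ((h ^ 2)⁻¹ • (x₃ - (2:ℝ) • x₂ + x₁))
            + (σ * h ^ 2) • A ((h ^ 2)⁻¹ • (x₃ - (2:ℝ) • x₂ + x₁)) + A x₂,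
          h⁻¹ • (x₃ - x₂) + h⁻¹ • (x₂ - x₁)⟫ := by
  simp only [energy, map_add, map_sub, map_smul, smul_sub, smul_add, inner_add_left,
    inner_add_right, inner_sub_left, inner_sub_right, real_inner_smul_left,
    real_inner_smul_right, hB.inner_map_comm x₂ x₁, hB.inner_map_comm x₃ x₁,
    hB.inner_map_comm x₃ x₂, hA.inner_map_comm x₂ x₁, hA.inner_map_comm x₃ x₁,
    hA.inner_map_comm x₃ x₂]
  field_simp
  ring

lemma energy_eq_of_initial (hh : h ≠ 0) (x₀ x₁ : H) :
    energy B A σ h x₀ x₁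
      = ⟪B (h⁻¹ • (x₁ - x₀)) + (σ * h ^ 2) • A (h⁻¹ • (x₁ - x₀)) + ((1/2) * h) • A x₀,
          h⁻¹ • (x₁ - x₀)⟫ + ⟪A x₀, (1/2 : ℝ) • (x₀ + x₁)⟫ := by
  simp only [energy, map_add, map_sub, map_smul, smul_sub, smul_add, inner_add_left,
    inner_add_right, inner_sub_left, inner_sub_right, real_inner_smul_left,
    real_inner_smul_right, hB.inner_map_comm x₁ x₀, hA.inner_map_comm x₁ x₀]
  field_simp
  ring

end Identities

section Estimates

variable (hB : B.IsPositive) (hA : A.IsPositive) (hBi : ∀ x, B (Bi x) = x)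
  (hcoer : ∀ w, ε ^ 2 * ⟪B w, w⟫ ≤ ⟪B w, w⟫ + (σ - 1/4) * h ^ 2 * ⟪A w, w⟫)
  (hε : 0 < ε)
include hB hA hBi hcoer hε

lemma inner_le_mul_sqrt_energy (g x y : H) :
    ⟪g, h⁻¹ • (y - x)⟫ ≤ ε⁻¹ * √⟪Bi g, g⟫ * √(energy B A σ h x y) :=
  calc ⟪g, h⁻¹ • (y - x)⟫ ≤ √⟪Bi g, g⟫ * √⟪B (h⁻¹ • (y - x)), h⁻¹ • (y - x)⟫ :=
        hB.inner_le_sqrt_rightInverse_mul_sqrt hBi _ _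
    _ ≤ √⟪Bi g, g⟫ * (ε⁻¹ * √(energy B A σ h x y)) := by
        gcongr
        exact sqrt_inner_le_inv_mul_sqrt_energy hcoer hA hε x y
    _ = ε⁻¹ * √⟪Bi g, g⟫ * √(energy B A σ h x y) := by ring

lemma sqrt_energy_le_add (hh : 0 < h) {x₁ x₂ x₃ g : H}
    (heq : B ((h ^ 2)⁻¹ • (x₃ - (2:ℝ) • x₂ + x₁))
      + (σ * h ^ 2) • A ((h ^ 2)⁻¹ • (x₃ - (2:ℝ) • x₂ + x₁)) + A x₂ = g) :
    √(energy B A σ h x₂ x₃) ≤ √(energy B A σ h x₁ x₂) + h * ε⁻¹ * √⟪Bi g, g⟫ := by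
  have hdiff := energy_sub_energy (σ := σ) hB.isSymmetric hA.isSymmetric hh.ne' x₁ x₂ x₃
  rw [heq, inner_add_right] at hdiff
  have h₂₃ := mul_le_mul_of_nonneg_left
    (inner_le_mul_sqrt_energy hB hA hBi hcoer hε g x₂ x₃) hh.le
  have h₁₂ := mul_le_mul_of_nonneg_left
    (inner_le_mul_sqrt_energy hB hA hBi hcoer hε g x₁ x₂) hh.le
  apply le_add_of_sq_le_sq_add_mul (Real.sqrt_nonneg _) (by positivity)
  rw [Real.sq_sqrt (energy_nonneg hcoer hB hA _ _), Real.sq_sqrt (energy_nonneg hcoer hB hA _ _)]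
  linarith

lemma sqrt_energy_le_of_initial (hh : 0 < h) {x₀ x₁ u f₀ : H}
    (hinit : B (h⁻¹ • (x₁ - x₀)) + (σ * h ^ 2) • A (h⁻¹ • (x₁ - x₀)) + ((1/2) * h) • A x₀
      = u + ((1/2) * h) • f₀) :
    √(energy B A σ h x₀ x₁)
      ≤ √(⟪A x₀, x₀⟫ + ε⁻¹ ^ 2 * ⟪Bi u, u⟫) + ε⁻¹ * ((1/2) * h * √⟪Bi f₀, f₀⟫) := by
  have hE : energy B A σ h x₀ x₁ = ⟪A x₀, (1/2 : ℝ) • (x₀ + x₁)⟫ + ⟪u, h⁻¹ • (x₁ - x₀)⟫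
      + (1/2) * h * ⟪f₀, h⁻¹ • (x₁ - x₀)⟫ := by
    rw [energy_eq_of_initial hB.isSymmetric hA.isSymmetric hh.ne', hinit, inner_add_left,
      real_inner_smul_left]
    ring
  set d := h⁻¹ • (x₁ - x₀)
  set s := (1/2 : ℝ) • (x₀ + x₁)
  set E := energy B A σ h x₀ x₁
  set Q := √(⟪A x₀, x₀⟫ + ε⁻¹ ^ 2 * ⟪Bi u, u⟫)
  -- Cauchy–Schwarz in `ℝ²` for the pairs `(‖x₀‖_A, ε⁻¹‖u‖_{B⁻¹})` and `(‖s‖_A, ε‖d‖_B)`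
  have hdata : ⟪A x₀, s⟫ + ⟪u, d⟫ ≤ Q * √E :=
    calc ⟪A x₀, s⟫ + ⟪u, d⟫
        ≤ √⟪A x₀, x₀⟫ * √⟪A s, s⟫ + ε⁻¹ * √⟪Bi u, u⟫ * (ε * √⟪B d, d⟫) := by
          rw [mul_mul_mul_comm, inv_mul_cancel₀ hε.ne', one_mul]
          exact add_le_add (hA.inner_le_sqrt_mul_sqrt _ _)
            (hB.inner_le_sqrt_rightInverse_mul_sqrt hBi _ _)
      _ ≤ √(√⟪A x₀, x₀⟫ ^ 2 + (ε⁻¹ * √⟪Bi u, u⟫) ^ 2)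
            * √(√⟪A s, s⟫ ^ 2 + (ε * √⟪B d, d⟫) ^ 2) :=
          mul_add_mul_le_sqrt_mul_sqrt _ _ _ _
      _ ≤ Q * √E := by
          rw [mul_pow, mul_pow, Real.sq_sqrt (hA.inner_nonneg_left _),
            Real.sq_sqrt (hB.inner_rightInverse_self_nonneg hBi _),
            Real.sq_sqrt (hA.inner_nonneg_left _), Real.sq_sqrt (hB.inner_nonneg_left _),
            add_comm ⟪A s, s⟫]
          gcongr
          exact sq_mul_inner_add_inner_le_energy hcoer x₀ x₁
  have hforce := mul_le_mul_of_nonneg_left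
    (inner_le_mul_sqrt_energy hB hA hBi hcoer hε f₀ x₀ x₁) (by positivity : (0:ℝ) ≤ 1/2 * h)
  have hEsq : √E ^ 2 = E := Real.sq_sqrt (energy_nonneg hcoer hB hA _ _)
  have hQ : 0 ≤ Q + ε⁻¹ * ((1/2) * h * √⟪Bi f₀, f₀⟫) := by positivity
  nlinarith [Real.sqrt_nonneg E]

end Estimates

end ThreeLevel

theorem stmt_0
    {H : Type*} [NormedAddCommGroup H] [InnerProductSpace ℝ H]
    (B A Bi : H →ₗ[ℝ] H)
    (hBsym : ∀ x y : H, ⟪B x, y⟫ = ⟪x, B y⟫)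
    (hBpos : ∀ x : H, x ≠ 0 → 0 < ⟪B x, x⟫)
    (hAsym : ∀ x y : H, ⟪A x, y⟫ = ⟪x, A y⟫)
    (hApos : ∀ x : H, x ≠ 0 → 0 < ⟪A x, x⟫)
    (hBi : ∀ x : H, B (Bi x) = x)
    (T : ℝ) (hT : 0 < T) (M : ℕ) (hM : 2 ≤ M) (ht : ℝ) (hht : ht = T / M)
    (σ ε₀ : ℝ)
    (hσ : (1/4 ≤ σ ∧ ε₀ = 1) ∨
      (σ < 1/4 ∧ 0 < ε₀ ∧ ε₀ < 1 ∧ ∃ α : ℝ, 0 < α ∧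
        (∀ w : H, ⟪A w, w⟫ ≤ α^2 * ⟪B w, w⟫) ∧
        (1/4 - σ) * ht^2 * α^2 ≤ 1 - ε₀^2))
    (v : ℕ → H) (u₁ : H) (f : ℕ → H)
    (heq : ∀ m : ℕ, 1 ≤ m → m ≤ M - 1 →
      B ((ht^2)⁻¹ • (v (m+1) - (2:ℝ) • v m + v (m-1)))
        + (σ * ht^2) • A ((ht^2)⁻¹ • (v (m+1) - (2:ℝ) • v m + v (m-1)))
        + A (v m) = f m)
    (hinit : B (ht⁻¹ • (v 1 - v 0)) + (σ * ht^2) • A (ht⁻¹ • (v 1 - v 0))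
        + ((1/2) * ht) • A (v 0) = u₁ + ((1/2) * ht) • f 0) :
    ∀ m : ℕ, 1 ≤ m → m ≤ M →
      ⟪B (ht⁻¹ • (v m - v (m-1))), ht⁻¹ • (v m - v (m-1))⟫
        + (σ - 1/4) * ht^2 * ⟪A (ht⁻¹ • (v m - v (m-1))), ht⁻¹ • (v m - v (m-1))⟫
        + ⟪A ((1/2 : ℝ) • (v (m-1) + v m)), (1/2 : ℝ) • (v (m-1) + v m)⟫
      ≤ (Real.sqrt (⟪A (v 0), v 0⟫ + ε₀⁻¹^2 * ⟪Bi u₁, u₁⟫)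
          + 2 * ε₀⁻¹ * ((1/4) * ht * Real.sqrt ⟪Bi (f 0), f 0⟫
            + ht * ∑ l ∈ Finset.Icc 1 (M-1), Real.sqrt ⟪Bi (f l), f l⟫))^2 := by
  have hB := LinearMap.isPositive_of_inner_pos hBsym hBpos
  have hA := LinearMap.isPositive_of_inner_pos hAsym hApos
  have hh : 0 < ht := hht ▸ div_pos hT (by exact_mod_cast (by omega : 0 < M))
  have hε : 0 < ε₀ := by
    rcases hσ with ⟨-, rfl⟩ | ⟨-, hε, -⟩
    exacts [one_pos, hε]
  have hcoer := ThreeLevel.sq_mul_inner_le_add_of_weight hB hA hσ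
  have hstart : √(ThreeLevel.energy B A σ ht (v 0) (v 1))
      ≤ √(⟪A (v 0), v 0⟫ + ε₀⁻¹ ^ 2 * ⟪Bi u₁, u₁⟫) + ε₀⁻¹ * ((1/2) * ht * √⟪Bi (f 0), f 0⟫) :=
    ThreeLevel.sqrt_energy_le_of_initial hB hA hBi hcoer hε hh hinit
  have hgrowth := le_add_sum_Ico_of_le_add (M := M)
    (a := fun m => √(ThreeLevel.energy B A σ ht (v (m - 1)) (v m)))
    (c := fun l => ht * ε₀⁻¹ * √⟪Bi (f l), f l⟫)
    (fun m hm hmM => ThreeLevel.sqrt_energy_le_add hB hA hBi hcoer hε hh (heq m hm (by omega)))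
  intro m hm hmM
  have hsum : ∑ l ∈ Finset.Ico 1 m, ht * ε₀⁻¹ * √⟪Bi (f l), f l⟫
      ≤ ht * ε₀⁻¹ * ∑ l ∈ Finset.Icc 1 (M - 1), √⟪Bi (f l), f l⟫ := by
    rw [← Finset.mul_sum]
    refine mul_le_mul_of_nonneg_left (Finset.sum_le_sum_of_subset_of_nonneg ?_ ?_) (by positivity)
    · intro l hl
      simp only [Finset.mem_Ico, Finset.mem_Icc] at hl ⊢
      omega
    · exact fun _ _ _ => Real.sqrt_nonneg _
  have hS : 0 ≤ ht * ε₀⁻¹ * ∑ l ∈ Finset.Icc 1 (M - 1), √⟪Bi (f l), f l⟫ := by positivity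
  have hbound := hgrowth m hm hmM
  simp only [Nat.sub_self] at hbound
  show ThreeLevel.energy B A σ ht (v (m - 1)) (v m) ≤ _
  rw [← Real.sq_sqrt (ThreeLevel.energy_nonneg hcoer hB hA _ _)]
  gcongr
  linarith
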